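/- arXiv:1701.06608 — 4 statements merged into one kernel-verified Lean document; each statement's English description precedes it below -/
import Mathlib

section
/- Let $\mathcal{I}$ be a finite nonempty set and $z_i \in \mathbb{C}$ for $i \in \mathcal{I}$ with $\sum_{i\in\mathcal{I}} z_i = 1$ and no $z_i$ a nonpositive integer. Then $\sum_{\mathcal{H}\subseteq\mathcal{I}} \frac{\prod_{i\in\mathcal{I}}\Gamma(z_i)}{\Gamma(\sum_{i\in\mathcal{H}}z_i)\Gamma(\sum_{i\in\mathcal{I}\setminus\mathcal{H}}z_i)} = 2\pi^{|\mathcal{I}|/2 - 1}\prod_{i\in\mathcal{I}}\frac{\Gamma(z_i/2)}{\Gamma((1-z_i)/2)}$. -/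
/-!
By the reflection formula `1 / (Γ(s) Γ(1 - s)) = sin(π s) / π`, and since the `z i` sum to `1`,
each summand is `∏ Γ(z i) · sin(π ∑_{i ∈ H} z i) / π`. Writing `sin` through exponentials, the
sum of `exp(c ∑_{i ∈ H} z i)` over all subsets `H` factors as `∏ (1 + exp(c z i))`, which turns
the sum of sines into `sin(π / 2) ∏ 2 cos(π z i / 2)`. Finally the reflection formula in the form
`Γℝ(s) / Γℝ(1 - s) = Γℂ(s) cos(π s / 2)` converts each `Γ(z i) · 2 cos(π z i / 2)` into
`Γ(z i / 2) / Γ((1 - z i) / 2)` up to powers of `2` and `π`, whose exponents again sum to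
constants.
-/

open Finset Complex
open scoped Real

namespace Complex

lemma prod_cpow_eq_cpow_sum {ι : Type*} (s : Finset ι) {x : ℂ} (hx : x ≠ 0) (f : ι → ℂ) :
    ∏ i ∈ s, x ^ f i = x ^ ∑ i ∈ s, f i := by
  simp_rw [cpow_def_of_ne_zero hx, ← exp_sum, mul_sum]

lemma inv_Gamma_mul_Gamma_one_sub (s : ℂ) :
    (Gamma s * Gamma (1 - s))⁻¹ = sin (π * s) / π := by
  rw [Gamma_mul_Gamma_one_sub, inv_div]

lemma Gammaℝ_div_Gammaℝ_one_sub_eq (s : ℂ) :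
    Gammaℝ s / Gammaℝ (1 - s) =
      (π : ℂ) ^ (1 / 2 - s) * (Gamma (s / 2) / Gamma ((1 - s) / 2)) := by
  rw [Gammaℝ_def, Gammaℝ_def, mul_div_mul_comm,
    ← cpow_sub _ _ (ofReal_ne_zero.mpr Real.pi_ne_zero)]
  congr 2
  ring

lemma Gamma_mul_two_mul_cos {s : ℂ} (hs : ∀ n : ℕ, s ≠ -(2 * n + 1)) :
    Gamma s * (2 * cos (π * s / 2)) =
      (2 * π) ^ s * (π : ℂ) ^ (1 / 2 - s) * (Gamma (s / 2) / Gamma ((1 - s) / 2)) := by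
  have h2π : (2 * π : ℂ) ^ s ≠ 0 :=
    cpow_ne_zero_iff.mpr (.inl (mul_ne_zero two_ne_zero (ofReal_ne_zero.mpr Real.pi_ne_zero)))
  rw [mul_assoc, ← Gammaℝ_div_Gammaℝ_one_sub_eq, Gammaℝ_div_Gammaℝ_one_sub hs, Gammaℂ_def,
    cpow_neg]
  field_simp

lemma sum_powerset_exp_mul_sum {ι : Type*} (s : Finset ι) (w : ι → ℂ) (c : ℂ) :
    ∑ H ∈ s.powerset, exp (c * ∑ i ∈ H, w i) =
      exp (c * (∑ i ∈ s, w i) / 2) * ∏ i ∈ s, 2 * cosh (c * w i / 2) := by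
  have one_add_exp (x : ℂ) : 1 + exp x = exp (x / 2) * (2 * cosh (x / 2)) := by
    rw [cosh, mul_div_cancel₀ _ two_ne_zero, mul_add, ← exp_add, ← exp_add, add_halves,
      add_neg_cancel, exp_zero, add_comm]
  calc ∑ H ∈ s.powerset, exp (c * ∑ i ∈ H, w i)
      = ∑ H ∈ s.powerset, ∏ i ∈ H, exp (c * w i) := by simp_rw [mul_sum, exp_sum]
    _ = ∏ i ∈ s, (1 + exp (c * w i)) := (prod_one_add s).symm
    _ = _ := by simp_rw [one_add_exp, prod_mul_distrib, ← exp_sum, mul_sum, sum_div]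

lemma sum_powerset_sin_sum {ι : Type*} (s : Finset ι) (w : ι → ℂ) :
    ∑ H ∈ s.powerset, sin (∑ i ∈ H, w i) =
      sin ((∑ i ∈ s, w i) / 2) * ∏ i ∈ s, 2 * cos (w i / 2) := by
  have hcosh (x : ℂ) : cosh (I * x / 2) = cos (x / 2) := by
    rw [mul_div_assoc, mul_comm, cosh_mul_I]
  have hplus : ∑ H ∈ s.powerset, exp (I * ∑ i ∈ H, w i) =
      exp (I * (∑ i ∈ s, w i) / 2) * ∏ i ∈ s, 2 * cos (w i / 2) := by
    simp_rw [sum_powerset_exp_mul_sum, hcosh]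
  have hminus : ∑ H ∈ s.powerset, exp (-I * ∑ i ∈ H, w i) =
      exp (-I * (∑ i ∈ s, w i) / 2) * ∏ i ∈ s, 2 * cos (w i / 2) := by
    simp_rw [sum_powerset_exp_mul_sum, neg_mul, neg_div, cosh_neg, hcosh]
  calc ∑ H ∈ s.powerset, sin (∑ i ∈ H, w i)
      = ∑ H ∈ s.powerset, (exp (-I * ∑ i ∈ H, w i) - exp (I * ∑ i ∈ H, w i)) * I / 2 := by
        refine sum_congr rfl fun H _ ↦ ?_
        rw [sin]
        ring_nf
    _ = (exp (-I * (∑ i ∈ s, w i) / 2) - exp (I * (∑ i ∈ s, w i) / 2)) * I / 2 *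
          ∏ i ∈ s, 2 * cos (w i / 2) := by
        rw [← sum_div, ← sum_mul, sum_sub_distrib, hplus, hminus]
        ring
    _ = _ := by
        rw [sin]
        ring_nf

end Complex

theorem gamma_subset_sum_identity_general {ι : Type*} [DecidableEq ι] (I : Finset ι)
    (z : ι → ℂ) (hsum : ∑ i ∈ I, z i = 1)
    (hz : ∀ i ∈ I, ∀ n : ℕ, z i ≠ -(n : ℂ)) :
    ∑ H ∈ I.powerset,
      (∏ i ∈ I, Complex.Gamma (z i)) /
        (Complex.Gamma (∑ i ∈ H, z i) * Complex.Gamma (∑ i ∈ I \ H, z i)) =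
      2 * (Real.pi : ℂ) ^ ((I.card : ℂ) / 2 - 1) *
        ∏ i ∈ I, Complex.Gamma (z i / 2) / Complex.Gamma ((1 - z i) / 2) := by
  have hπ : (π : ℂ) ≠ 0 := ofReal_ne_zero.mpr Real.pi_ne_zero
  have hodd (i : ι) (hi : i ∈ I) (n : ℕ) : z i ≠ -(2 * n + 1) := by
    exact_mod_cast hz i hi (2 * n + 1)
  have hexponent : ∑ i ∈ I, (1 / 2 - z i) = (I.card : ℂ) / 2 - 1 := by
    rw [sum_sub_distrib, hsum, sum_const, nsmul_eq_mul]
    ring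
  calc _ = (∏ i ∈ I, Gamma (z i)) *
          (∑ H ∈ I.powerset, sin (∑ i ∈ H, π * z i)) / π := by
        rw [mul_sum, sum_div]
        refine sum_congr rfl fun H hH ↦ ?_
        rw [sum_sdiff_eq_sub (mem_powerset.mp hH), hsum, div_eq_mul_inv,
          inv_Gamma_mul_Gamma_one_sub, mul_sum, mul_div_assoc]
    _ = (∏ i ∈ I, Gamma (z i) * (2 * cos (π * z i / 2))) / π := by
        rw [sum_powerset_sin_sum, ← mul_sum, hsum, mul_one, sin_pi_div_two, one_mul,
          ← prod_mul_distrib]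
    _ = (2 * π) ^ (1 : ℂ) * (π : ℂ) ^ ((I.card : ℂ) / 2 - 1) *
          (∏ i ∈ I, Gamma (z i / 2) / Gamma ((1 - z i) / 2)) / π := by
        rw [prod_congr rfl fun i hi ↦ Gamma_mul_two_mul_cos (hodd i hi), prod_mul_distrib,
          prod_mul_distrib, prod_cpow_eq_cpow_sum _ (by simp [hπ]),
          prod_cpow_eq_cpow_sum _ hπ, hsum, hexponent]
    _ = _ := by
        rw [cpow_one]
        field_simp

theorem gamma_subset_sum_identity {ι : Type*} [DecidableEq ι] (I : Finset ι)
    (hI : I.Nonempty) (z : ι → ℂ) (hsum : ∑ i ∈ I, z i = 1)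
    (hz : ∀ i ∈ I, ∀ n : ℕ, z i ≠ -(n : ℂ)) :
    ∑ H ∈ I.powerset,
      (∏ i ∈ I, Complex.Gamma (z i)) /
        (Complex.Gamma (∑ i ∈ H, z i) * Complex.Gamma (∑ i ∈ I \ H, z i)) =
      2 * (Real.pi : ℂ) ^ ((I.card : ℂ) / 2 - 1) *
        ∏ i ∈ I, Complex.Gamma (z i / 2) / Complex.Gamma ((1 - z i) / 2) :=
  gamma_subset_sum_identity_general I z hsum hz
end

section
/- Let $a, n$ be positive integers and let $s$ be a complex number with $\Re(s) > 1$. Then $\delta_{a|n}\sum_{\ell\geq1}\frac{c_\ell(n/a)}{\ell^s} = \frac{1}{a}\sum_{\ell\geq1}\frac{c_\ell(n)}{\ell^s}(\ell,a)^s$, where $\delta_{a|n}=1$ if $a\mid n$ and $0$ otherwise. -/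
/-!
Möbius inversion of `∑_{d ∣ j} c_d(k) = j · [j ∣ k]` gives `c_j(k) = ∑_{d ∣ (j,k)} d μ(j/d)`, hence
`∑_j c_j(k) w(j) = ∑_{d ∣ k} d ∑_e μ(e) w(de)` for absolutely summable `w`. For
`w(j) = (j,a)^s / j^s`, the identity `(de, a) = (d, a) (e, a/(d,a))` turns the inner series into a
multiple of `∑_e μ(e) (e,b)^s / e^s` with `b = a/(d,a)`. Its Euler factor at a prime `p ∣ b` is
`1 - p^s/p^s = 0`, so only the divisors `d` with `a ∣ d` survive, each contributing
`d (a/d)^s ∑_e μ(e)/e^s`. Substituting `d = a d'` matches the left-hand side, which is the case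
`a = 1` of the same computation applied to `n/a`.
-/

open Finset

/-- The Ramanujan sum `c_ℓ(m) = ∑_{h mod ℓ, (h,ℓ)=1} e^{2πi h m / ℓ}`. -/
noncomputable def ramanujanSum (ℓ : ℕ) (m : ℤ) : ℂ :=
  ∑ h ∈ (Finset.range ℓ).filter (fun h => Nat.Coprime h ℓ),
    Complex.exp (2 * Real.pi * Complex.I * h * m / ℓ)

open Complex ArithmeticFunction
open scoped ArithmeticFunction.Moebius

lemma sum_range_exp_eq_ite {j : ℕ} (hj : 0 < j) (k : ℕ) :
    ∑ h ∈ range j, exp (2 * Real.pi * I * h * k / j) = if j ∣ k then (j : ℂ) else 0 := by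
  have hζ := isPrimitiveRoot_exp j hj.ne'
  have hterm (h : ℕ) : exp (2 * Real.pi * I * h * k / j) = (exp (2 * Real.pi * I / j) ^ k) ^ h := by
    rw [← pow_mul, ← exp_nat_mul]; push_cast; ring_nf
  simp_rw [hterm]
  split_ifs with hdvd
  · simp [(hζ.pow_eq_one_iff_dvd k).mpr hdvd]
  · have hne : exp (2 * Real.pi * I / j) ^ k ≠ 1 := mt (hζ.pow_eq_one_iff_dvd k).mp hdvd
    rw [geom_sum_eq hne, pow_right_comm, hζ.pow_eq_one, one_pow, sub_self, zero_div]

lemma ramanujanSum_div_eq_sum_gcd_eq {j g : ℕ} (hg : g ∣ j) (k : ℤ) :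
    ramanujanSum (j / g) k = ∑ h ∈ range j with j.gcd h = g, exp (2 * Real.pi * I * h * k / j) := by
  rcases g.eq_zero_or_pos with rfl | hg0
  · simp [Nat.eq_zero_of_zero_dvd hg, ramanujanSum]
  obtain ⟨x, rfl⟩ := hg
  rw [Nat.mul_div_cancel_left x hg0, ramanujanSum]
  refine sum_bij (fun h _ => g * h) ?_ (fun _ _ _ _ h => Nat.eq_of_mul_eq_mul_left hg0 h) ?_ ?_
  · simp only [mem_filter, mem_range]
    rintro h ⟨hlt, hcop⟩
    exact ⟨by gcongr, by rw [Nat.gcd_mul_left, hcop.symm, mul_one]⟩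
  · simp only [mem_filter, mem_range, exists_prop]
    rintro _ ⟨hlt, hgcd⟩
    obtain ⟨h, rfl⟩ : g ∣ _ := hgcd ▸ Nat.gcd_dvd_right _ _
    refine ⟨h, ⟨(mul_lt_mul_iff_right₀ hg0).1 hlt, ?_⟩, rfl⟩
    rw [Nat.gcd_mul_left, mul_eq_left₀ hg0.ne'] at hgcd
    exact Nat.coprime_comm.mp hgcd
  · intro h _
    have : (g : ℂ) ≠ 0 := by exact_mod_cast hg0.ne'
    congr 1
    push_cast
    field_simp

lemma sum_divisors_ramanujanSum {j : ℕ} (hj : 0 < j) (k : ℕ) :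
    ∑ d ∈ j.divisors, ramanujanSum d k = if j ∣ k then (j : ℂ) else 0 := by
  rw [← Nat.sum_div_divisors, ← sum_range_exp_eq_ite hj,
    ← sum_fiberwise_of_maps_to (s := range j) (g := j.gcd) (t := j.divisors)
      (fun h _ => Nat.mem_divisors.2 ⟨Nat.gcd_dvd_left j h, hj.ne'⟩)]
  refine sum_congr rfl fun g hg => ?_
  rw [ramanujanSum_div_eq_sum_gcd_eq (Nat.dvd_of_mem_divisors hg)]
  push_cast
  rfl

lemma ramanujanSum_eq_sum_divisors (j : ℕ) {k : ℕ} (hk : 0 < k) :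
    ramanujanSum j k = ∑ d ∈ k.divisors, if d ∣ j then (d : ℂ) * μ (j / d) else 0 := by
  rcases j.eq_zero_or_pos with rfl | hj
  · simp [ramanujanSum]
  rw [← (sum_eq_iff_sum_smul_moebius_eq.mp fun n hn => sum_divisors_ramanujanSum hn k) j hj,
    Nat.sum_divisorsAntidiagonal' (f := fun x y => (μ x : ℤ) • if y ∣ k then (y : ℂ) else 0)]
  simp_rw [smul_ite, smul_zero, zsmul_eq_mul]
  rw [← sum_filter, ← sum_filter]
  refine sum_congr ?_ fun d _ => mul_comm _ _
  ext d
  simp only [mem_filter, Nat.mem_divisors]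
  exact ⟨fun ⟨⟨h1, _⟩, h2⟩ => ⟨⟨h2, hk.ne'⟩, h1⟩, fun ⟨⟨h1, _⟩, h2⟩ => ⟨⟨h2, hj.ne'⟩, h1⟩⟩

lemma tsum_ramanujanSum_succ_mul (k : ℤ) (w : ℕ → ℂ) :
    ∑' ℓ : ℕ, ramanujanSum (ℓ + 1) k * w (ℓ + 1) = ∑' j, ramanujanSum j k * w j := by
  rw [← tsum_pnat_eq_tsum_succ (f := fun j => ramanujanSum j k * w j)]
  exact tsum_pnat_eq_tsum_of_eq_zero (f := fun j => ramanujanSum j k * w j) (by simp [ramanujanSum])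

lemma tsum_ramanujanSum_mul {k : ℕ} (hk : 0 < k) {w : ℕ → ℂ} (hw : Summable (‖w ·‖)) :
    ∑' j, ramanujanSum j k * w j = ∑ d ∈ k.divisors, d * ∑' e, μ e * w (d * e) := by
  simp_rw [ramanujanSum_eq_sum_divisors _ hk, sum_mul]
  rw [Summable.tsum_finsetSum fun d _ => ?summable]
  case summable =>
    refine .of_norm <| (hw.mul_left (d : ℝ)).of_nonneg_of_le (fun _ => norm_nonneg _) fun j => ?_
    rw [norm_mul]
    gcongr
    split_ifs
    · rw [norm_mul, Complex.norm_natCast, norm_intCast]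
      exact mul_le_of_le_one_right (Nat.cast_nonneg d) (mod_cast abs_moebius_le_one)
    · simp
  refine sum_congr rfl fun d hd => ?_
  have hd0 := Nat.pos_of_mem_divisors hd
  rw [← tsum_mul_left, ← (mul_right_injective₀ hd0.ne').tsum_eq]
  · refine tsum_congr fun e => ?_
    simp [Nat.mul_div_cancel_left e hd0, mul_assoc]
  · intro j hj
    by_cases hdj : d ∣ j
    · exact hdj.imp fun _ h => h.symm
    · simp [hdj] at hj

lemma Nat.gcd_mul_eq_gcd_mul_gcd_div (d e a : ℕ) :
    (d * e).gcd a = d.gcd a * e.gcd (a / d.gcd a) := by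
  rcases (d.gcd a).eq_zero_or_pos with hg | hg
  · simp [Nat.gcd_eq_zero_iff.mp hg]
  obtain ⟨d', a', hcop, hd, ha⟩ := Nat.exists_coprime d a
  set g := d.gcd a
  rw [hd, ha, Nat.mul_div_cancel _ hg, mul_right_comm, Nat.gcd_mul_right,
    Nat.Coprime.gcd_mul_left_cancel e hcop, mul_comm]

lemma summable_norm_gcd_cpow_div_cpow {a : ℕ} (ha : 0 < a) {s : ℂ} (hs : 1 < s.re) :
    Summable fun j : ℕ => ‖(j.gcd a : ℂ) ^ s / (j : ℂ) ^ s‖ := by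
  have hs0 : s ≠ 0 := fun h => by simp [h] at hs; linarith
  have hbdd (j : ℕ) : ‖(j.gcd a : ℂ) ^ s‖ ≤ (a : ℝ) ^ s.re := by
    rw [norm_natCast_cpow_of_pos (Nat.gcd_pos_of_pos_right j ha)]
    gcongr
    exact Nat.gcd_le_right j ha
  have := (LSeriesSummable_of_bounded_of_one_lt_re (fun j _ => hbdd j) hs).norm
  simpa only [LSeries.term_of_ne_zero' hs0] using this

lemma tsum_moebius_mul_gcd_cpow_div_cpow_eq_zero {b : ℕ} (hb : 1 < b) {s : ℂ} (hs : 1 < s.re) :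
    ∑' e : ℕ, μ e * ((e.gcd b : ℂ) ^ s / (e : ℂ) ^ s) = 0 := by
  set f : ℕ → ℂ := fun e => μ e * ((e.gcd b : ℂ) ^ s / (e : ℂ) ^ s)
  have hmul {m n : ℕ} (hmn : m.Coprime n) : f (m * n) = f m * f n := by
    simp only [f, isMultiplicative_moebius.map_mul_of_coprime hmn, Nat.gcd_comm _ b,
      Nat.Coprime.gcd_mul b hmn]
    push_cast
    rw [natCast_mul_natCast_cpow, natCast_mul_natCast_cpow]
    ring
  have hsum : Summable (‖f ·‖) := by
    refine (summable_norm_gcd_cpow_div_cpow (Nat.zero_lt_of_lt hb) hs).of_nonneg_of_le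
      (fun _ => norm_nonneg _) fun e => ?_
    rw [norm_mul, norm_intCast]
    exact mul_le_of_le_one_left (norm_nonneg _) (mod_cast abs_moebius_le_one : |(μ e : ℝ)| ≤ 1)
  obtain ⟨p, hp, hpb⟩ := Nat.exists_prime_and_dvd (by omega : b ≠ 1)
  have hfactor : ∑' e, f (p ^ e) = 0 := by
    rw [tsum_eq_sum (s := range 2)]
    · have hp0 : (p : ℂ) ^ s ≠ 0 := by simp [cpow_eq_zero_iff, hp.ne_zero]
      simp [f, sum_range_succ, moebius_apply_prime hp, Nat.gcd_eq_left hpb, hp0]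
    · intro e he
      have he2 : 1 < e := by simpa using he
      simp [f, moebius_apply_prime_pow hp (by omega : e ≠ 0), show e ≠ 1 by omega]
  rw [← EulerProduct.eulerProduct_tprod (by simp [f]) hmul hsum (by simp [f])]
  exact tprod_of_exists_eq_zero ⟨⟨p, hp⟩, hfactor⟩

lemma tsum_moebius_mul_gcd_cpow_div_cpow {a d : ℕ} (ha : 0 < a) {s : ℂ} (hs : 1 < s.re) :
    ∑' e : ℕ, μ e * (((d * e).gcd a : ℂ) ^ s / ((d * e : ℕ) : ℂ) ^ s) =
      if a ∣ d then (a : ℂ) ^ s / (d : ℂ) ^ s * ∑' e : ℕ, μ e / (e : ℂ) ^ s else 0 := by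
  have hsplit (e : ℕ) : μ e * (((d * e).gcd a : ℂ) ^ s / ((d * e : ℕ) : ℂ) ^ s) =
      (d.gcd a : ℂ) ^ s / (d : ℂ) ^ s * (μ e * ((e.gcd (a / d.gcd a) : ℂ) ^ s / (e : ℂ) ^ s)) := by
    rw [Nat.gcd_mul_eq_gcd_mul_gcd_div]
    push_cast
    rw [natCast_mul_natCast_cpow, natCast_mul_natCast_cpow]
    ring
  rw [tsum_congr hsplit, tsum_mul_left]
  split_ifs with had
  · simp [Nat.gcd_eq_right had, Nat.div_self ha, div_eq_mul_inv]
  · have hg := Nat.gcd_pos_of_pos_right d ha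
    have hb : 1 < a / d.gcd a := by
      refine lt_of_le_of_ne (Nat.div_pos (Nat.gcd_le_right d ha) hg) fun h => had ?_
      rw [eq_comm, Nat.div_eq_iff_eq_mul_left hg (Nat.gcd_dvd_right d a), one_mul] at h
      exact h ▸ Nat.gcd_dvd_left d a
    rw [tsum_moebius_mul_gcd_cpow_div_cpow_eq_zero hb hs, mul_zero]

theorem tsum_ramanujanSum_mul_gcd_cpow_div_cpow {k a : ℕ} (hk : 0 < k) (ha : 0 < a) {s : ℂ}
    (hs : 1 < s.re) :
    ∑' j : ℕ, ramanujanSum j k * ((j.gcd a : ℂ) ^ s / (j : ℂ) ^ s) =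
      ∑ d ∈ k.divisors with a ∣ d,
        d * ((a : ℂ) ^ s / (d : ℂ) ^ s) * ∑' e : ℕ, μ e / (e : ℂ) ^ s := by
  rw [tsum_ramanujanSum_mul hk (summable_norm_gcd_cpow_div_cpow ha hs), sum_filter]
  refine sum_congr rfl fun d _ => ?_
  rw [tsum_moebius_mul_gcd_cpow_div_cpow ha hs]
  split_ifs <;> ring

lemma tsum_ramanujanSum_div_cpow {k : ℕ} (hk : 0 < k) {s : ℂ} (hs : 1 < s.re) :
    ∑' j : ℕ, ramanujanSum j k / (j : ℂ) ^ s =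
      ∑ d ∈ k.divisors, d / (d : ℂ) ^ s * ∑' e : ℕ, μ e / (e : ℂ) ^ s := by
  simpa [div_eq_mul_inv] using tsum_ramanujanSum_mul_gcd_cpow_div_cpow hk one_pos hs

lemma Nat.sum_divisors_filter_dvd {M : Type*} [AddCommMonoid M] {a n : ℕ} (ha : 0 < a) (han : a ∣ n)
    (f : ℕ → M) : ∑ d ∈ n.divisors with a ∣ d, f d = ∑ d ∈ (n / a).divisors, f (a * d) := by
  obtain ⟨m, rfl⟩ := han
  rw [Nat.mul_div_cancel_left m ha]
  refine (sum_nbij' (a * ·) (· / a) ?_ ?_ ?_ ?_ fun _ _ => rfl).symm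
  · intro d hd
    simp only [Nat.mem_divisors, mem_filter] at hd ⊢
    exact ⟨⟨mul_dvd_mul_left a hd.1, mul_ne_zero ha.ne' hd.2⟩, dvd_mul_right a d⟩
  · rintro _ hd
    simp only [Nat.mem_divisors, mem_filter] at hd ⊢
    obtain ⟨⟨hdm, hm⟩, c, rfl⟩ := hd
    rw [Nat.mul_div_cancel_left c ha]
    exact ⟨Nat.dvd_of_mul_dvd_mul_left ha hdm, right_ne_zero_of_mul hm⟩
  · intro d _
    exact Nat.mul_div_cancel_left d ha
  · intro d hd
    exact Nat.mul_div_cancel' (mem_filter.1 hd).2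

theorem ramanujan_sum_dilation (a n : ℕ) (ha : 0 < a) (hn : 0 < n) (s : ℂ)
    (hs : 1 < s.re) :
    (if a ∣ n then ∑' ℓ : ℕ, ramanujanSum (ℓ + 1) ((n / a : ℕ) : ℤ) / ((ℓ : ℂ) + 1) ^ s
      else 0) =
    (1 / (a : ℂ)) * ∑' ℓ : ℕ,
      ramanujanSum (ℓ + 1) (n : ℤ) * ((Nat.gcd (ℓ + 1) a : ℂ) ^ s) / ((ℓ : ℂ) + 1) ^ s := by
  have hL : ∑' ℓ : ℕ, ramanujanSum (ℓ + 1) ((n / a : ℕ) : ℤ) / ((ℓ : ℂ) + 1) ^ s =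
      ∑' j : ℕ, ramanujanSum j (n / a : ℕ) / (j : ℂ) ^ s := by
    simpa [div_eq_mul_inv] using tsum_ramanujanSum_succ_mul (n / a : ℕ) fun j => ((j : ℂ) ^ s)⁻¹
  have hR : ∑' ℓ : ℕ, ramanujanSum (ℓ + 1) n * (Nat.gcd (ℓ + 1) a : ℂ) ^ s / ((ℓ : ℂ) + 1) ^ s =
      ∑' j : ℕ, ramanujanSum j n * ((j.gcd a : ℂ) ^ s / (j : ℂ) ^ s) := by
    simpa [mul_div_assoc] using
      tsum_ramanujanSum_succ_mul n fun j => (j.gcd a : ℂ) ^ s / (j : ℂ) ^ s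
  rw [hL, hR, tsum_ramanujanSum_mul_gcd_cpow_div_cpow hn ha hs]
  split_ifs with han
  · rw [tsum_ramanujanSum_div_cpow (Nat.div_pos (Nat.le_of_dvd hn han) ha) hs,
      Nat.sum_divisors_filter_dvd ha han, mul_sum]
    refine sum_congr rfl fun d hd => ?_
    have hda : (d : ℂ) ^ s ≠ 0 := by simp [cpow_eq_zero_iff, (Nat.pos_of_mem_divisors hd).ne']
    have haa : (a : ℂ) ^ s ≠ 0 := by simp [cpow_eq_zero_iff, ha.ne']
    have ha0 : (a : ℂ) ≠ 0 := by exact_mod_cast ha.ne'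
    push_cast
    rw [natCast_mul_natCast_cpow]
    field_simp
  · rw [filter_false_of_mem fun d hd had => han (had.trans (Nat.dvd_of_mem_divisors hd)),
      sum_empty, mul_zero]
end

section
/- For $\Re(s) > 1$, $\sum_{n\geq1}\frac{d(n)^2}{n^s} = \frac{\zeta(s)^4}{\zeta(2s)}$. -/
/-!
Both `n ↦ d(n)²` and the indicator `1_□` of the nonzero squares are multiplicative, and at a prime
power `p^e` the Dirichlet convolution `d² * 1_□` takes the value
`∑_{i + j = e, j even} (i + 1)² = (e + 3).choose 3 = ζ⁴(p^e)`. Hence `d² * 1_□ = ζ⁴` as arithmetic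
functions. Since the L-series of `1_□` is `ζ(2s)`, this gives `L(d², s) ζ(2s) = ζ(s)⁴` for
`Re s > 1`, and `ζ(2s) ≠ 0` there.
-/

open Finset LSeries ArithmeticFunction
open scoped ArithmeticFunction.zeta ArithmeticFunction.sigma LSeries.notation

namespace Nat

theorem Prime.isSquare_pow_iff {p : ℕ} (hp : p.Prime) {k : ℕ} :
    IsSquare (p ^ k) ↔ Even k := by
  refine ⟨fun ⟨a, ha⟩ => ?_, fun ⟨i, hi⟩ => ⟨p ^ i, by rw [hi, pow_add]⟩⟩
  obtain ⟨i, -, rfl⟩ := (Nat.dvd_prime_pow hp).mp (Dvd.intro a ha.symm)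
  rw [← pow_add] at ha
  exact ⟨i, Nat.pow_right_injective hp.two_le ha⟩

theorem Coprime.isSquare_mul_iff {m n : ℕ} (h : m.Coprime n) :
    IsSquare (m * n) ↔ IsSquare m ∧ IsSquare n := by
  refine ⟨fun ⟨c, hc⟩ => ?_, fun ⟨hm, hn⟩ => hm.mul hn⟩
  have hu : IsUnit (gcd m n) := Nat.isUnit_iff.mpr h
  obtain ⟨a, ha⟩ := exists_eq_pow_of_mul_eq_pow hu (k := 2) (by rw [hc, sq])
  obtain ⟨b, hb⟩ := exists_eq_pow_of_mul_eq_pow (gcd_comm m n ▸ hu) (k := 2)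
    (by rw [mul_comm, hc, sq])
  exact ⟨⟨a, by rw [ha, sq]⟩, ⟨b, by rw [hb, sq]⟩⟩

theorem sum_antidiagonal_sq_mul_ite_even (e : ℕ) :
    ∑ x ∈ antidiagonal e, (x.1 + 1) ^ 2 * (if Even x.2 then 1 else 0) = (e + 3).choose 3 := by
  induction e using Nat.twoStepInduction with
  | zero => rfl
  | one => rfl
  | more n ih _ =>
    have hchoose : (n + 5).choose 3 = (n + 3) ^ 2 + (n + 3).choose 3 := by
      have h := Nat.add_one_mul_choose_eq (n + 2) 1
      simp only [Nat.choose_succ_succ' (n + 4), Nat.choose_succ_succ' (n + 3),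
        Nat.choose_one_right] at h ⊢
      linarith
    -- peel off the terms with `x.2 = 0, 1`; the rest is the sum for `n` with `x.2` shifted by 2
    rw [Nat.sum_antidiagonal_succ', Nat.sum_antidiagonal_succ']
    simp only [Nat.even_add_one, not_not, ih, hchoose]
    simp

end Nat

theorem LSeriesHasSum_delta (s : ℂ) : LSeriesHasSum δ s 1 := by
  simpa [LSeriesHasSum, funext (term_delta s)] using hasSum_ite_eq 1 (1 : ℂ)

theorem LSeriesSummable.of_norm_le {f g : ℕ → ℂ} {s : ℂ} (hg : LSeriesSummable g s)
    (h : ∀ n, ‖f n‖ ≤ ‖g n‖) : LSeriesSummable f s :=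
  hg.norm.of_norm_bounded fun n => norm_term_le s (h n)

theorem LSeries_eq_tsum_add_one (f : ℕ → ℂ) (s : ℂ) :
    L f s = ∑' n : ℕ, f (n + 1) / ((n : ℂ) + 1) ^ s := by
  rw [LSeries, ← Nat.succ_injective.tsum_eq]
  · simp [term_of_ne_zero]
  · intro n hn
    have hn0 : n ≠ 0 := by rintro rfl; exact hn (term_zero f s)
    exact ⟨n - 1, Nat.succ_pred_eq_of_ne_zero hn0⟩

namespace ArithmeticFunction

theorem mul_apply_prime_pow {R : Type*} [Semiring R] (f g : ArithmeticFunction R) {p : ℕ}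
    (hp : p.Prime) (k : ℕ) :
    (f * g) (p ^ k) = ∑ x ∈ antidiagonal k, f (p ^ x.1) * g (p ^ x.2) := by
  rw [mul_apply, Nat.sum_divisorsAntidiagonal (f · * g ·), Nat.sum_divisors_prime_pow hp,
    Nat.sum_antidiagonal_eq_sum_range_succ_mk]
  refine sum_congr rfl fun i hi => ?_
  rw [Nat.pow_div (by grind) hp.pos]

theorem apply_le_mul_apply (f g : ArithmeticFunction ℕ) (hg : g 1 = 1) (n : ℕ) :
    f n ≤ (f * g) n := by
  rcases eq_or_ne n 0 with rfl | hn
  · simp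
  calc f n = f n * g 1 := by rw [hg, mul_one]
    _ ≤ (f * g) n := single_le_sum (f := fun x => f x.1 * g x.2) (a := (n, 1))
        (fun _ _ => Nat.zero_le _) (Nat.mem_divisorsAntidiagonal.mpr ⟨mul_one n, hn⟩)

theorem natCoe_pow {R : Type*} [Semiring R] (f : ArithmeticFunction ℕ) (k : ℕ) :
    (↑(f ^ k) : ArithmeticFunction R) = (f : ArithmeticFunction R) ^ k := by
  induction k with
  | zero => simp
  | succ k ih => rw [pow_succ, natCoe_mul, ih, pow_succ]

theorem LSeriesHasSum_pow {f : ArithmeticFunction ℂ} {s a : ℂ} (hf : LSeriesHasSum ↗f s a)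
    (k : ℕ) : LSeriesHasSum ↗(f ^ k) s (a ^ k) := by
  induction k with
  | zero => simpa [one_eq_delta] using LSeriesHasSum_delta s
  | succ k ih => simpa [pow_succ] using LSeriesHasSum_mul ih hf

theorem zeta_pow_apply_prime_pow {p : ℕ} (hp : p.Prime) (k e : ℕ) :
    ((ζ : ArithmeticFunction ℕ) ^ (k + 1)) (p ^ e) = (e + k).choose k := by
  induction k generalizing e with
  | zero => simp [hp.ne_zero]
  | succ k ih =>
    rw [pow_succ, mul_apply_prime_pow _ _ hp, Nat.sum_antidiagonal_eq_sum_range_succ_mk]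
    simp only [ih, zeta_apply, pow_eq_zero_iff', hp.ne_zero, false_and, if_false, mul_one]
    rw [Nat.sum_range_add_choose]
    ring_nf

def squareIndicator : ArithmeticFunction ℕ :=
  ⟨fun n => if n ≠ 0 ∧ IsSquare n then 1 else 0, by simp⟩

theorem squareIndicator_apply (n : ℕ) :
    squareIndicator n = if n ≠ 0 ∧ IsSquare n then 1 else 0 := rfl

theorem isMultiplicative_squareIndicator : squareIndicator.IsMultiplicative := by
  refine ⟨by simp [squareIndicator_apply], fun {m n} h => ?_⟩
  simp only [squareIndicator_apply, h.isSquare_mul_iff, mul_ne_zero_iff]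
  grind

theorem squareIndicator_apply_prime_pow {p : ℕ} (hp : p.Prime) (k : ℕ) :
    squareIndicator (p ^ k) = if Even k then 1 else 0 := by
  simp [squareIndicator_apply, hp.isSquare_pow_iff, hp.ne_zero]

theorem sigma_zero_ppow_two_mul_squareIndicator :
    (σ 0).ppow 2 * squareIndicator = ζ ^ 4 := by
  refine (IsMultiplicative.eq_iff_eq_on_prime_powers _ (isMultiplicative_sigma.ppow.mul
    isMultiplicative_squareIndicator) _ isMultiplicative_zeta.pow).mpr fun p e hp => ?_
  simp only [mul_apply_prime_pow _ _ hp, ppow_apply two_pos, sigma_zero_apply_prime_pow hp,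
    squareIndicator_apply_prime_pow hp, zeta_pow_apply_prime_pow hp 3]
  exact Nat.sum_antidiagonal_sq_mul_ite_even e

theorem LSeriesHasSum_squareIndicator {s : ℂ} (hs : 1 < s.re) :
    LSeriesHasSum ↗squareIndicator s (riemannZeta (2 * s)) := by
  have h2s : 1 < (2 * s).re := by simp; linarith
  rw [LSeriesHasSum, ← (Nat.pow_left_injective two_ne_zero).hasSum_iff]
  · suffices term ↗squareIndicator s ∘ (· ^ 2) = term ↗ζ (2 * s) from
      this ▸ LSeriesHasSum_zeta h2s
    ext m
    rcases eq_or_ne m 0 with rfl | hm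
    · simp
    rw [Function.comp_apply, term_of_ne_zero (pow_ne_zero 2 hm), term_of_ne_zero hm,
      squareIndicator_apply, if_pos ⟨pow_ne_zero 2 hm, ⟨m, sq m⟩⟩, Nat.cast_pow, sq,
      Complex.natCast_mul_natCast_cpow, ← sq, ← Complex.cpow_ofNat_mul]
    simp [hm]
  · intro n hn
    have hsq : ¬IsSquare n := fun ⟨m, hm⟩ => hn ⟨m, (sq m).trans hm.symm⟩
    simp [term_def, squareIndicator_apply, hsq]

theorem LSeries_sigma_zero_ppow_two_mul_riemannZeta {s : ℂ} (hs : 1 < s.re) :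
    L ↗((σ 0).ppow 2) s * riemannZeta (2 * s) = riemannZeta s ^ 4 := by
  have hζ : LSeriesHasSum ↗(ζ : ArithmeticFunction ℂ) s (riemannZeta s) := by
    simpa using LSeriesHasSum_zeta hs
  have hζ4 : LSeriesHasSum ↗(↑(ζ ^ 4 : ArithmeticFunction ℕ) : ArithmeticFunction ℂ) s
      (riemannZeta s ^ 4) := by
    rw [natCoe_pow]
    exact LSeriesHasSum_pow hζ 4
  -- `d² ≤ d² * 1_□ = ζ⁴` coefficientwise
  have hd : LSeriesSummable ↗((σ 0).ppow 2) s := hζ4.LSeriesSummable.of_norm_le fun n => by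
    rw [← sigma_zero_ppow_two_mul_squareIndicator]
    simp only [natCoe_apply, Complex.norm_natCast, Nat.cast_le]
    exact apply_le_mul_apply _ _ (by simp [squareIndicator_apply]) n
  have hprod := LSeriesHasSum_mul (f := ↑((σ 0).ppow 2)) (g := ↑squareIndicator)
    hd.LSeriesHasSum (LSeriesHasSum_squareIndicator hs)
  rw [← natCoe_mul, sigma_zero_ppow_two_mul_squareIndicator] at hprod
  exact hprod.unique hζ4

end ArithmeticFunction

theorem divisor_squared_dirichlet_series (s : ℂ) (hs : 1 < s.re) :
    ∑' n : ℕ, (((n + 1 : ℕ).divisors.card : ℂ)) ^ 2 / ((n : ℂ) + 1) ^ s =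
      riemannZeta s ^ 4 / riemannZeta (2 * s) := by
  rw [eq_div_iff (riemannZeta_ne_zero_of_one_lt_re (by simp; linarith)),
    ← LSeries_sigma_zero_ppow_two_mul_riemannZeta hs, LSeries_eq_tsum_add_one]
  simp [ppow_apply two_pos, sigma_zero_apply]
end

section
/- Let $k \geq 2$ and $a_1,\dots,a_k$ be nonzero integers. Then $\sum_{\ell\geq1}\frac{\prod_{i=1}^k(a_i,\ell)}{\ell^k}\varphi(\ell) = \rho(\boldsymbol{a})\frac{\zeta(k-1)}{\zeta(k)}$ (for $k\geq3$; for $k=2$ the series diverges), where $\rho(\boldsymbol{a}) := \prod_{p\mid a_1\cdots a_k}\frac{1+\sum_{m=1}^\infty(1-1/p)p^m\prod_{i=1}^k p^{-\max(0,m-\nu_p(a_i))}}{1+(p-1)/(p^k-p)}$. -/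
open Finset

/-!
The summand `f(n) = ∏ (aᵢ, n) φ(n) / nᵏ` is multiplicative in `n` and `O(n^(1-k))`, so for `k ≥ 3`
the series is the Euler product of the local factors `∑ₑ f(pᵉ)`. At a prime `p` dividing no `aᵢ`
one has `f(pᵉ) = φ(pᵉ) / p^(ek)`, and the local factor is the geometric sum
`1 + (p - 1) / (pᵏ - p) = (1 - p^(-k)) / (1 - p^(1-k))`, the Euler factor of `ζ(k-1) / ζ(k)`.
So the two Euler products differ only at the primes dividing `a₁ ⋯ aₖ`, and their ratio is `ρ(a)`.
-/

/-- Real Riemann zeta, `ζ(u) = ∑_{n ≥ 1} n^{-u}` (equal to `ζ(u)` for `u > 1`). -/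
noncomputable def zetaR (u : ℝ) : ℝ := ∑' n : ℕ, 1 / ((n : ℝ) + 1) ^ u

/-- The arithmetic factor `ρ(a)` from the paper. -/
noncomputable def rho (k : ℕ) (a : Fin k → ℤ) : ℝ :=
  ∏ p ∈ (∏ i, a i).natAbs.primeFactors,
    (1 + ∑' m : ℕ, (1 - 1 / (p : ℝ)) * (p : ℝ) ^ (m + 1) *
        ∏ i, (p : ℝ) ^ (-(max 0 ((m : ℤ) + 1 - ((a i).natAbs.factorization p : ℤ))))) /
      (1 + ((p : ℝ) - 1) / ((p : ℝ) ^ k - (p : ℝ)))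

noncomputable section

def gcdTotientTerm (k : ℕ) (a : Fin k → ℤ) (n : ℕ) : ℝ :=
  (∏ i, (Int.gcd (a i) n : ℝ)) * n.totient / (n : ℝ) ^ k

def gcdTotientEulerFactor (k : ℕ) (a : Fin k → ℤ) (p : ℕ) : ℝ :=
  ∑' e, gcdTotientTerm k a (p ^ e)

end

lemma Nat.gcd_prime_pow {p x : ℕ} (hp : p.Prime) (hx : x ≠ 0) (e : ℕ) :
    x.gcd (p ^ e) = p ^ min (x.factorization p) e := by
  obtain ⟨j, -, hj⟩ := (Nat.dvd_prime_pow hp).mp (Nat.gcd_dvd_right x (p ^ e))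
  have h := congrArg (· p) (Nat.factorization_gcd hx (pow_ne_zero e hp.ne_zero))
  simp only [hj, hp.factorization_pow, Finsupp.inf_apply, Finsupp.single_eq_same] at h
  rw [hj, h]

lemma zpow_min_eq_zpow_mul_zpow_neg_max {G₀ : Type*} [GroupWithZero G₀] {x : G₀} (hx : x ≠ 0)
    (v e : ℕ) : x ^ min v e = x ^ (e : ℤ) * x ^ (-(max 0 ((e : ℤ) - v))) := by
  rw [← zpow_natCast, ← zpow_add₀ hx]
  congr 1
  omega

lemma one_add_div_pow_sub_self_mul {x : ℝ} (hx : 1 < x) {k : ℕ} (hk : 2 ≤ k) :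
    (1 + (x - 1) / (x ^ k - x)) * (1 - (x ^ (k - 1))⁻¹) = 1 - (x ^ k)⁻¹ := by
  obtain ⟨j, rfl⟩ := Nat.exists_eq_add_of_le' hk
  have h1 : 1 < x ^ (j + 1) := one_lt_pow₀ hx (by omega)
  have h2 : x ^ (j + 2) - x ≠ 0 := by rw [pow_succ]; nlinarith
  rw [show j + 2 - 1 = j + 1 from rfl]
  field_simp
  ring

section

variable {k : ℕ} {a : Fin k → ℤ}

@[simp] lemma gcdTotientTerm_zero : gcdTotientTerm k a 0 = 0 := by simp [gcdTotientTerm]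

@[simp] lemma gcdTotientTerm_one : gcdTotientTerm k a 1 = 1 := by simp [gcdTotientTerm]

lemma gcdTotientTerm_mul {m n : ℕ} (h : m.Coprime n) :
    gcdTotientTerm k a (m * n) = gcdTotientTerm k a m * gcdTotientTerm k a n := by
  have hgcd : ∀ i, Int.gcd (a i) ↑(m * n) = Int.gcd (a i) m * Int.gcd (a i) n := fun i => by
    simp only [Int.gcd_eq_natAbs, Int.natAbs_natCast]
    exact Nat.Coprime.gcd_mul _ h
  simp only [gcdTotientTerm, hgcd, Nat.totient_mul h]
  push_cast
  rw [prod_mul_distrib]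
  ring

lemma gcdTotientTerm_nonneg (n : ℕ) : 0 ≤ gcdTotientTerm k a n := by
  unfold gcdTotientTerm
  positivity

lemma gcdTotientTerm_le (hk : 1 ≤ k) (ha : ∀ i, a i ≠ 0) (n : ℕ) :
    gcdTotientTerm k a n ≤ (∏ i, ((a i).natAbs : ℝ)) * ((n : ℝ) ^ (k - 1))⁻¹ := by
  rcases n.eq_zero_or_pos with rfl | hn
  · simp only [gcdTotientTerm_zero]
    positivity
  have hn' : (0 : ℝ) < n := by exact_mod_cast hn
  have hpow : (n : ℝ) ^ k = n * n ^ (k - 1) := by rw [← pow_succ']; congr 1; omega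
  have htot : (n.totient : ℝ) / n ≤ 1 := by
    rw [div_le_one hn']
    exact_mod_cast Nat.totient_le n
  calc gcdTotientTerm k a n
      = (∏ i, (Int.gcd (a i) n : ℝ)) * ((n.totient : ℝ) / n) * ((n : ℝ) ^ (k - 1))⁻¹ := by
        rw [gcdTotientTerm, hpow]; field_simp
    _ ≤ (∏ i, ((a i).natAbs : ℝ)) * 1 * ((n : ℝ) ^ (k - 1))⁻¹ := by
        gcongr with i
        exact Nat.gcd_le_left _ (Int.natAbs_pos.mpr (ha i))
    _ = _ := by rw [mul_one]

lemma summable_gcdTotientTerm (hk : 3 ≤ k) (ha : ∀ i, a i ≠ 0) : Summable (gcdTotientTerm k a) :=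
  .of_nonneg_of_le gcdTotientTerm_nonneg (gcdTotientTerm_le (by omega) ha)
    ((Real.summable_nat_pow_inv.mpr (by omega)).mul_left _)

lemma gcdTotientTerm_prime_pow_succ {p : ℕ} (hp : p.Prime) (ha : ∀ i, a i ≠ 0) (m : ℕ) :
    gcdTotientTerm k a (p ^ (m + 1)) = (1 - 1 / (p : ℝ)) * (p : ℝ) ^ (m + 1) *
      ∏ i, (p : ℝ) ^ (-(max 0 ((m : ℤ) + 1 - ((a i).natAbs.factorization p : ℤ)))) := by
  have hp0 : (p : ℝ) ≠ 0 := by exact_mod_cast hp.ne_zero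
  have hgcd : ∀ i, (Int.gcd (a i) ↑(p ^ (m + 1)) : ℝ) = (p : ℝ) ^ ((m + 1 : ℕ) : ℤ) *
      (p : ℝ) ^ (-(max 0 ((m : ℤ) + 1 - ((a i).natAbs.factorization p : ℤ)))) := fun i => by
    rw [Int.gcd_eq_natAbs, Int.natAbs_natCast,
      Nat.gcd_prime_pow hp (Int.natAbs_ne_zero.mpr (ha i)), Nat.cast_pow,
      zpow_min_eq_zpow_mul_zpow_neg_max hp0]
    push_cast
    rfl
  simp only [gcdTotientTerm, hgcd, prod_mul_distrib, prod_const, card_univ, Fintype.card_fin,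
    Nat.totient_prime_pow_succ hp, zpow_natCast]
  push_cast [Nat.cast_sub hp.one_le]
  field_simp
  ring

lemma gcdTotientTerm_prime_pow_of_not_dvd {p : ℕ} (hp : p.Prime) (hpa : ∀ i, ¬ (p : ℤ) ∣ a i)
    (e : ℕ) : gcdTotientTerm k a (p ^ e) = (p ^ e).totient / ((p : ℝ) ^ e) ^ k := by
  have hgcd : ∀ i, Int.gcd (a i) ↑(p ^ e) = 1 := fun i => by
    rw [Int.gcd_eq_natAbs, Int.natAbs_natCast]
    refine Nat.Coprime.pow_right _ (Nat.coprime_comm.mp ?_)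
    exact (Nat.Prime.coprime_iff_not_dvd hp).mpr fun h => hpa i (Int.natCast_dvd.mpr h)
  simp only [gcdTotientTerm, hgcd]
  simp

lemma gcdTotientEulerFactor_eq (hk : 3 ≤ k) (ha : ∀ i, a i ≠ 0) {p : ℕ} (hp : p.Prime) :
    gcdTotientEulerFactor k a p = 1 + ∑' m : ℕ, (1 - 1 / (p : ℝ)) * (p : ℝ) ^ (m + 1) *
      ∏ i, (p : ℝ) ^ (-(max 0 ((m : ℤ) + 1 - ((a i).natAbs.factorization p : ℤ)))) := by
  have hsum : Summable fun e => gcdTotientTerm k a (p ^ e) :=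
    (summable_gcdTotientTerm hk ha).comp_injective (Nat.pow_right_injective hp.two_le)
  rw [gcdTotientEulerFactor, hsum.tsum_eq_zero_add, pow_zero, gcdTotientTerm_one]
  simp only [gcdTotientTerm_prime_pow_succ hp ha]

lemma gcdTotientEulerFactor_of_not_dvd (hk : 2 ≤ k) {p : ℕ} (hp : p.Prime)
    (hpa : ∀ i, ¬ (p : ℤ) ∣ a i) :
    gcdTotientEulerFactor k a p = 1 + ((p : ℝ) - 1) / ((p : ℝ) ^ k - p) := by
  obtain ⟨j, rfl⟩ := Nat.exists_eq_add_of_le' hk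
  have hp1 : (1 : ℝ) < p := by exact_mod_cast hp.one_lt
  have h1 : 1 < (p : ℝ) ^ (j + 1) := one_lt_pow₀ hp1 (by omega)
  have hterm : ∀ m, gcdTotientTerm (j + 2) a (p ^ (m + 1)) =
      ((p : ℝ) - 1) / (p : ℝ) ^ (j + 2) * (((p : ℝ) ^ (j + 1))⁻¹) ^ m := fun m => by
    rw [gcdTotientTerm_prime_pow_of_not_dvd hp hpa, Nat.totient_prime_pow_succ hp]
    push_cast [Nat.cast_sub hp.one_le]
    rw [inv_pow, ← pow_mul]
    field_simp
    ring
  have hgeom : HasSum (fun m => gcdTotientTerm (j + 2) a (p ^ (m + 1)))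
      (((p : ℝ) - 1) / (p : ℝ) ^ (j + 2) * (1 - ((p : ℝ) ^ (j + 1))⁻¹)⁻¹) := by
    simp only [hterm]
    exact (hasSum_geometric_of_lt_one (by positivity) (inv_lt_one_of_one_lt₀ h1)).mul_left _
  have hsum : Summable fun e => gcdTotientTerm (j + 2) a (p ^ e) :=
    (summable_nat_add_iff 1).mp hgeom.summable
  rw [gcdTotientEulerFactor, hsum.tsum_eq_zero_add, hgeom.tsum_eq, pow_zero, gcdTotientTerm_one]
  have h2 : (p : ℝ) ^ (j + 2) - p ≠ 0 := by rw [pow_succ]; nlinarith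
  have h3 : (p : ℝ) ^ (j + 1) - 1 ≠ 0 := by linarith
  field_simp
  ring

lemma hasProd_gcdTotientEulerFactor_div (hk : 3 ≤ k) (ha : ∀ i, a i ≠ 0) :
    HasProd (fun p : Nat.Primes =>
      gcdTotientEulerFactor k a p / (1 + ((p : ℝ) - 1) / ((p : ℝ) ^ k - p))) (rho k a) := by
  set P := (∏ i, a i).natAbs.primeFactors
  have hP : ∀ p : Nat.Primes, (p : ℕ) ∉ P → ∀ i, ¬ ((p : ℕ) : ℤ) ∣ a i := by
    intro p hp i hpa
    refine hp (Nat.mem_primeFactors.mpr ⟨p.2, ?_, ?_⟩)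
    · exact Int.natCast_dvd.mp (hpa.trans (dvd_prod_of_mem a (mem_univ i)))
    · exact Int.natAbs_ne_zero.mpr (prod_ne_zero_iff.mpr fun i _ => ha i)
  have hone : ∀ p ∉ (P.subtype Nat.Prime : Finset Nat.Primes),
      gcdTotientEulerFactor k a p / (1 + ((p : ℝ) - 1) / ((p : ℝ) ^ k - p)) = 1 := by
    intro p hp
    rw [gcdTotientEulerFactor_of_not_dvd (by omega) p.2 (hP p fun h => hp (mem_subtype.mpr h))]
    refine div_self (ne_of_gt ?_)
    have : (p : ℝ) < (p : ℝ) ^ k := lt_self_pow₀ (by exact_mod_cast p.2.one_lt) (by omega)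
    have : (1 : ℝ) ≤ p := by exact_mod_cast p.2.one_le
    positivity
  suffices h : rho k a = ∏ p ∈ (P.subtype Nat.Prime : Finset Nat.Primes),
      gcdTotientEulerFactor k a p / (1 + ((p : ℝ) - 1) / ((p : ℝ) ^ k - p)) from
    h ▸ hasProd_prod_of_ne_finset_one hone
  rw [rho, prod_subtype_of_mem (fun p : ℕ => gcdTotientEulerFactor k a p /
    (1 + ((p : ℝ) - 1) / ((p : ℝ) ^ k - p))) fun p => Nat.prime_of_mem_primeFactors]
  refine prod_congr rfl fun p hp => ?_
  rw [gcdTotientEulerFactor_eq hk ha (Nat.prime_of_mem_primeFactors hp)]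

end

lemma hasProd_zetaR {j : ℕ} (hj : 2 ≤ j) :
    HasProd (fun p : Nat.Primes => (1 - ((p : ℝ) ^ j)⁻¹)⁻¹) (zetaR j) := by
  let f : ℕ →*₀ ℝ := (invMonoidWithZeroHom.comp (powMonoidWithZeroHom (by omega : j ≠ 0))).comp
    (Nat.castRingHom ℝ).toMonoidWithZeroHom
  have hf : ∀ n, f n = ((n : ℝ) ^ j)⁻¹ := fun n => rfl
  have hsum : Summable (‖f ·‖) := by
    simpa [hf] using Real.summable_nat_pow_inv.mpr hj
  have hz : zetaR j = ∑' n, f n := by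
    rw [hsum.of_norm.tsum_eq_zero_add, map_zero, zero_add, zetaR]
    simp [hf]
  simpa only [hz, hf] using EulerProduct.eulerProduct_completely_multiplicative_hasProd hsum

lemma zetaR_pos {j : ℕ} (hj : 2 ≤ j) : 0 < zetaR j := by
  have hsum : Summable fun n : ℕ => 1 / ((n : ℝ) + 1) ^ (j : ℝ) := by
    simpa [Real.rpow_natCast] using
      (summable_nat_add_iff 1).mpr (Real.summable_one_div_nat_pow.mpr hj)
  exact hsum.tsum_pos (fun n => by positivity) 0 (by positivity)

theorem gcd_totient_series_eval (k : ℕ) (hk : 3 ≤ k) (a : Fin k → ℤ)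
    (ha : ∀ i, a i ≠ 0) :
    ∑' ℓ : ℕ, (∏ i, (Int.gcd (a i) ((ℓ : ℤ) + 1) : ℝ)) * (Nat.totient (ℓ + 1) : ℝ) /
        ((ℓ : ℝ) + 1) ^ k =
      rho k a * (zetaR ((k : ℝ) - 1) / zetaR k) := by
  have hsum := summable_gcdTotientTerm hk ha
  have hseries : ∑' ℓ : ℕ, (∏ i, (Int.gcd (a i) ((ℓ : ℤ) + 1) : ℝ)) *
      (Nat.totient (ℓ + 1) : ℝ) / ((ℓ : ℝ) + 1) ^ k = ∑' n, gcdTotientTerm k a n := by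
    rw [hsum.tsum_eq_zero_add, gcdTotientTerm_zero, zero_add]
    simp [gcdTotientTerm]
  have hEuler : HasProd (fun p : Nat.Primes => gcdTotientEulerFactor k a p)
      (∑' n, gcdTotientTerm k a n) :=
    EulerProduct.eulerProduct_hasProd gcdTotientTerm_one gcdTotientTerm_mul
      (hsum.congr fun n => (Real.norm_of_nonneg (gcdTotientTerm_nonneg n)).symm)
      gcdTotientTerm_zero
  have hk1 : (k : ℝ) - 1 = (k - 1 : ℕ) := by rw [Nat.cast_sub (by omega), Nat.cast_one]
  have hprod : (∑' n, gcdTotientTerm k a n) * zetaR k = rho k a * zetaR (k - 1 : ℕ) := by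
    refine (hEuler.mul (hasProd_zetaR (by omega))).unique ?_
    -- compare the two Euler products factor by factor
    convert (hasProd_gcdTotientEulerFactor_div hk ha).mul (hasProd_zetaR (j := k - 1) (by omega))
      using 2 with p
    rw [← one_add_div_pow_sub_self_mul (by exact_mod_cast p.2.one_lt) (by omega), mul_inv,
      ← mul_assoc, div_eq_mul_inv (gcdTotientEulerFactor k a p)]
  rw [hseries, hk1, mul_div_assoc', eq_div_iff (zetaR_pos (by omega)).ne', hprod]
end
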